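/- The affine span over ℝ of the range of the occupancy measure map m : Π → ℝ^{S×A} has direction (difference space) of dimension exactly |S|·(|A|−1), and the image m(Π⁺) of the set Π⁺ of policies that take every action with positive probability in every state is an open subset of this affine span (in the subspace topology inherited from ℝ^{S×A}). -/
import Mathlib


open scoped BigOperators

/-- A probability vector on a finite type. -/
def IsProbVec {X : Type} [Fintype X] (p : X → ℝ) : Prop :=
  (∀ x, 0 ≤ p x) ∧ ∑ x, p x = 1

/-- A (stationary) policy: a probability vector over actions for each state. -/
def Policy (S A : Type) [Fintype A] : Type :=
  {p : S → A → ℝ // ∀ s, IsProbVec (p s)}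

/-- The transition matrix `P_π` induced by a policy `π` under transition function `τ`. -/
noncomputable def Pmat {S A : Type} [Fintype S] [Fintype A]
    (τ : S → A → S → ℝ) (π : Policy S A) : Matrix S S ℝ :=
  Matrix.of fun s s' => ∑ a, π.1 s a * τ s a s'

/-- The state distribution `ι P_π^t` at time `t`. -/
noncomputable def stateDist {S A : Type} [Fintype S] [DecidableEq S] [Fintype A]
    (τ : S → A → S → ℝ) (ι : S → ℝ) (π : Policy S A) (t : ℕ) : S → ℝ :=
  Matrix.vecMul ι (Pmat τ π ^ t)

/-- The expected one-step reward `r_{R,π}`. -/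
noncomputable def rvec {S A : Type} [Fintype S] [Fintype A]
    (τ : S → A → S → ℝ) (R : S → A → S → ℝ) (π : Policy S A) (s : S) : ℝ :=
  ∑ a, π.1 s a * ∑ s', τ s a s' * R s a s'

/-- The policy evaluation function `J_R(π)`. -/
noncomputable def Jval {S A : Type} [Fintype S] [DecidableEq S] [Fintype A]
    (τ : S → A → S → ℝ) (ι : S → ℝ) (γ : ℝ) (R : S → A → S → ℝ)
    (π : Policy S A) : ℝ :=
  ∑' t : ℕ, γ ^ t * ∑ s, stateDist τ ι π t s * rvec τ R π s

/-- Every state is reachable under `τ` and `ι`. -/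
def AllReachable {S A : Type} [Fintype S] [DecidableEq S] [Fintype A]
    (τ : S → A → S → ℝ) (ι : S → ℝ) : Prop :=
  ∀ s : S, ∃ (π : Policy S A) (t : ℕ), 0 < stateDist τ ι π t s

/-- `π` is an optimal policy for `R`. -/
def IsOptimal {S A : Type} [Fintype S] [DecidableEq S] [Fintype A]
    (τ : S → A → S → ℝ) (ι : S → ℝ) (γ : ℝ) (R : S → A → S → ℝ)
    (π : Policy S A) : Prop :=
  ∀ π' : Policy S A, Jval τ ι γ R π' ≤ Jval τ ι γ R π

/-- `R₁ ≡_OPT R₂`: the same policies are optimal for `R₁` and `R₂`. -/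
def EquivOPT {S A : Type} [Fintype S] [DecidableEq S] [Fintype A]
    (τ : S → A → S → ℝ) (ι : S → ℝ) (γ : ℝ) (R₁ R₂ : S → A → S → ℝ) : Prop :=
  ∀ π : Policy S A, IsOptimal τ ι γ R₁ π ↔ IsOptimal τ ι γ R₂ π

/-- `R₁ ≡_ORD R₂`: `R₁` and `R₂` induce the same ordering of policies. -/
def EquivORD {S A : Type} [Fintype S] [DecidableEq S] [Fintype A]
    (τ : S → A → S → ℝ) (ι : S → ℝ) (γ : ℝ) (R₁ R₂ : S → A → S → ℝ) : Prop :=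
  ∀ π π' : Policy S A,
    (Jval τ ι γ R₁ π' < Jval τ ι γ R₁ π ↔ Jval τ ι γ R₂ π' < Jval τ ι γ R₂ π)

/-- `f` is `P`-admissible: `f R₁ = f R₂` implies `P R₁ R₂`. -/
def PAdmissible {R : Type*} {X : Type*} (P : R → R → Prop) (f : R → X) : Prop :=
  ∀ R₁ R₂ : R, f R₁ = f R₂ → P R₁ R₂

/-- `f` is `P`-robust to misspecification with `g`. -/
def PRobust {R : Type*} {X : Type*} (P : R → R → Prop) (f g : R → X) : Prop :=
  PAdmissible P f ∧ f ≠ g ∧ Set.range g ⊆ Set.range f ∧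
    ∀ R₁ R₂ : R, f R₁ = g R₂ → P R₁ R₂

/-- The occupancy measure map `m : Π → ℝ^{S×A}`. -/
noncomputable def occ {S A : Type} [Fintype S] [DecidableEq S] [Fintype A]
    (τ : S → A → S → ℝ) (ι : S → ℝ) (γ : ℝ) (π : Policy S A) : S × A → ℝ :=
  fun p => ∑' t : ℕ, γ ^ t * stateDist τ ι π t p.1 * π.1 p.1 p.2

section OccAux
set_option linter.unusedSectionVars false

variable {S A : Type} [Fintype S] [DecidableEq S] [Fintype A]

/-- The Bellman flow linear map. -/
noncomputable def Fmap (τ : S → A → S → ℝ) (γ : ℝ) :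
    ((S × A) → ℝ) →ₗ[ℝ] (S → ℝ) where
  toFun x := fun s => (∑ a, x (s, a)) - γ * ∑ p : S × A, x p * τ p.1 p.2 s
  map_add' x y := by
    funext s
    simp only [Pi.add_apply, add_mul, Finset.sum_add_distrib]
    ring
  map_smul' c x := by
    funext s
    simp only [Pi.smul_apply, smul_eq_mul, RingHom.id_apply]
    rw [← Finset.mul_sum]
    have h2 : ∑ p : S × A, c * x p * τ p.1 p.2 s
        = c * ∑ p : S × A, x p * τ p.1 p.2 s := by
      rw [Finset.mul_sum]; exact Finset.sum_congr rfl fun p _ => by ring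
    rw [h2]; ring

/-- The discounted state visitation function. -/
noncomputable def nuF (τ : S → A → S → ℝ) (ι : S → ℝ) (γ : ℝ)
    (π : Policy S A) (s : S) : ℝ :=
  ∑' t : ℕ, γ ^ t * stateDist τ ι π t s

variable {τ : S → A → S → ℝ} {ι : S → ℝ} {γ : ℝ}

lemma pmat_apply (π : Policy S A) (s s' : S) :
    Pmat τ π s s' = ∑ a, π.1 s a * τ s a s' := rfl

lemma pmat_nonneg (hτ : ∀ s a, IsProbVec (τ s a)) (π : Policy S A) (s s' : S) :
    0 ≤ Pmat τ π s s' :=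
  Finset.sum_nonneg fun a _ => mul_nonneg ((π.2 s).1 a) ((hτ s a).1 s')

lemma pmat_row (hτ : ∀ s a, IsProbVec (τ s a)) (π : Policy S A) (s : S) :
    ∑ s', Pmat τ π s s' = 1 := by
  simp only [pmat_apply]
  rw [Finset.sum_comm]
  calc ∑ a, ∑ s', π.1 s a * τ s a s' = ∑ a, π.1 s a := by
        refine Finset.sum_congr rfl fun a _ => ?_
        rw [← Finset.mul_sum, (hτ s a).2, mul_one]
    _ = 1 := (π.2 s).2

lemma stateDist_zero (π : Policy S A) : stateDist τ ι π 0 = ι := by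
  funext s; simp [stateDist, Matrix.vecMul_one]

lemma stateDist_succ (π : Policy S A) (t : ℕ) (s : S) :
    stateDist τ ι π (t + 1) s = ∑ s', stateDist τ ι π t s' * Pmat τ π s' s := by
  simp only [stateDist, pow_succ, ← Matrix.vecMul_vecMul]
  simp [Matrix.vecMul, dotProduct]

lemma stateDist_probVec (hτ : ∀ s a, IsProbVec (τ s a)) (hι : IsProbVec ι)
    (π : Policy S A) (t : ℕ) : IsProbVec (stateDist τ ι π t) := by
  induction t with
  | zero => rw [stateDist_zero]; exact hι
  | succ t ih =>
    constructor
    · intro s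
      rw [stateDist_succ]
      exact Finset.sum_nonneg fun s' _ => mul_nonneg (ih.1 s') (pmat_nonneg hτ π s' s)
    · simp only [stateDist_succ]
      rw [Finset.sum_comm]
      calc ∑ s', ∑ s, stateDist τ ι π t s' * Pmat τ π s' s
          = ∑ s', stateDist τ ι π t s' := by
            refine Finset.sum_congr rfl fun s' _ => ?_
            rw [← Finset.mul_sum, pmat_row hτ, mul_one]
        _ = 1 := ih.2

lemma summable_nu (hτ : ∀ s a, IsProbVec (τ s a)) (hι : IsProbVec ι)
    (hγ0 : 0 < γ) (hγ1 : γ < 1) (π : Policy S A) (s : S) :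
    Summable (fun t : ℕ => γ ^ t * stateDist τ ι π t s) := by
  refine Summable.of_nonneg_of_le (fun t => ?_) (fun t => ?_)
    (summable_geometric_of_lt_one hγ0.le hγ1)
  · exact mul_nonneg (pow_nonneg hγ0.le t) ((stateDist_probVec hτ hι π t).1 s)
  · have h1 : stateDist τ ι π t s ≤ 1 := by
      have := (stateDist_probVec hτ hι π t).2
      rw [← this]
      exact Finset.single_le_sum (fun s' _ => (stateDist_probVec hτ hι π t).1 s')
        (Finset.mem_univ s)
    calc γ ^ t * stateDist τ ι π t s ≤ γ ^ t * 1 :=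
          mul_le_mul_of_nonneg_left h1 (pow_nonneg hγ0.le t)
      _ = γ ^ t := mul_one _

lemma occ_eq_nu (π : Policy S A) (p : S × A) :
    occ τ ι γ π p = nuF τ ι γ π p.1 * π.1 p.1 p.2 := by
  simp only [occ, nuF]
  exact tsum_mul_right

end OccAux
section OccAux2
set_option linter.unusedSectionVars false

variable {S A : Type} [Fintype S] [DecidableEq S] [Fintype A]
variable {τ : S → A → S → ℝ} {ι : S → ℝ} {γ : ℝ}

/-- The Bellman fixed point equation for `nuF`. -/
lemma nu_fixed (hτ : ∀ s a, IsProbVec (τ s a)) (hι : IsProbVec ι)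
    (hγ0 : 0 < γ) (hγ1 : γ < 1) (π : Policy S A) (s : S) :
    nuF τ ι γ π s = ι s + γ * ∑ s', nuF τ ι γ π s' * Pmat τ π s' s := by
  have hsum := summable_nu hτ hι hγ0 hγ1 π
  have h0 : nuF τ ι γ π s
      = γ ^ 0 * stateDist τ ι π 0 s + ∑' t : ℕ, γ ^ (t+1) * stateDist τ ι π (t+1) s :=
    Summable.tsum_eq_zero_add (hsum s)
  rw [h0, pow_zero, one_mul, stateDist_zero]
  congr 1
  have h1 : ∀ t : ℕ, γ ^ (t+1) * stateDist τ ι π (t+1) s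
      = γ * ∑ s', γ ^ t * stateDist τ ι π t s' * Pmat τ π s' s := by
    intro t
    rw [stateDist_succ, pow_succ, Finset.mul_sum]
    rw [Finset.mul_sum]
    exact Finset.sum_congr rfl fun s' _ => by ring
  rw [tsum_congr h1, tsum_mul_left]
  congr 1
  rw [Summable.tsum_finsetSum (fun s' _ => (hsum s').mul_right (Pmat τ π s' s))]
  exact Finset.sum_congr rfl fun s' _ => tsum_mul_right

/-- Occupancy measures satisfy the flow equation. -/
lemma Fmap_occ (hτ : ∀ s a, IsProbVec (τ s a)) (hι : IsProbVec ι)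
    (hγ0 : 0 < γ) (hγ1 : γ < 1) (π : Policy S A) :
    Fmap τ γ (occ τ ι γ π) = ι := by
  funext s
  show (∑ a, occ τ ι γ π (s, a)) - γ * ∑ p : S × A, occ τ ι γ π p * τ p.1 p.2 s = ι s
  have h1 : ∑ a, occ τ ι γ π (s, a) = nuF τ ι γ π s := by
    simp only [occ_eq_nu]
    rw [← Finset.mul_sum, (π.2 s).2, mul_one]
  have h2 : ∑ p : S × A, occ τ ι γ π p * τ p.1 p.2 s
      = ∑ s', nuF τ ι γ π s' * Pmat τ π s' s := by
    rw [Fintype.sum_prod_type]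
    refine Finset.sum_congr rfl fun s' _ => ?_
    rw [pmat_apply, Finset.mul_sum]
    exact Finset.sum_congr rfl fun a _ => by rw [occ_eq_nu]; ring
  rw [h1, h2, nu_fixed hτ hι hγ0 hγ1]
  ring

/-- Uniqueness of solutions to the fixed point equation. -/
lemma fixed_unique (hγ0 : 0 < γ) (hγ1 : γ < 1) (P : Matrix S S ℝ)
    (hP0 : ∀ s s', 0 ≤ P s s') (hP1 : ∀ s, ∑ s', P s s' = 1)
    (c μ ν : S → ℝ)
    (hμ : ∀ s, μ s = c s + γ * ∑ s', μ s' * P s' s)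
    (hν : ∀ s, ν s = c s + γ * ∑ s', ν s' * P s' s) : μ = ν := by
  set w : S → ℝ := fun s => μ s - ν s with hw
  have hfix : ∀ s, w s = γ * ∑ s', w s' * P s' s := by
    intro s
    simp only [hw]
    rw [hμ s, hν s]
    have hd : ∑ s', (μ s' - ν s') * P s' s
        = (∑ s', μ s' * P s' s) - ∑ s', ν s' * P s' s := by
      rw [← Finset.sum_sub_distrib]
      exact Finset.sum_congr rfl fun s' _ => sub_mul _ _ _
    rw [hd]
    ring
  have key : ∑ s, |w s| ≤ γ * ∑ s, |w s| := by
    calc ∑ s, |w s| = ∑ s, |γ * ∑ s', w s' * P s' s| := by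
          exact Finset.sum_congr rfl fun s _ => by rw [hfix s]
      _ = γ * ∑ s, |∑ s', w s' * P s' s| := by
          rw [Finset.mul_sum]
          exact Finset.sum_congr rfl fun s _ => by
            rw [abs_mul, abs_of_nonneg hγ0.le]
      _ ≤ γ * ∑ s, ∑ s', |w s'| * P s' s := by
          refine mul_le_mul_of_nonneg_left (Finset.sum_le_sum fun s _ => ?_) hγ0.le
          refine (Finset.abs_sum_le_sum_abs _ _).trans ?_
          exact Finset.sum_le_sum fun s' _ => by
            rw [abs_mul, abs_of_nonneg (hP0 s' s)]
      _ = γ * ∑ s', |w s'| * ∑ s, P s' s := by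
          rw [Finset.sum_comm]
          congr 1
          exact Finset.sum_congr rfl fun s' _ => (Finset.mul_sum _ _ _).symm
      _ = γ * ∑ s', |w s'| := by
          congr 1
          exact Finset.sum_congr rfl fun s' _ => by rw [hP1, mul_one]
  have hnn : 0 ≤ ∑ s, |w s| := Finset.sum_nonneg fun s _ => abs_nonneg _
  have hz : ∑ s, |w s| = 0 := by nlinarith
  funext s
  have : |w s| = 0 := by
    have := (Finset.sum_eq_zero_iff_of_nonneg (fun s _ => abs_nonneg (w s))).mp hz
    exact this s (Finset.mem_univ s)
  have := abs_eq_zero.mp this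
  simp only [hw] at this
  linarith

end OccAux2
section OccAux3
set_option linter.unusedSectionVars false

variable {S A : Type} [Fintype S] [DecidableEq S] [Fintype A] [Nonempty A]
variable {τ : S → A → S → ℝ} {ι : S → ℝ} {γ : ℝ}

lemma exists_pos_of_sum_pos {X : Type} [Fintype X] {f : X → ℝ}
    (h : 0 < ∑ x, f x) : ∃ x, 0 < f x := by
  by_contra hc
  push_neg at hc
  have : ∑ x, f x ≤ 0 := Finset.sum_nonpos fun x _ => hc x
  linarith

/-- Positive policies reach everything any policy reaches. -/
lemma reach_mono (hτ : ∀ s a, IsProbVec (τ s a)) (hι : IsProbVec ι)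
    (π π' : Policy S A) (hπ : ∀ s a, 0 < π.1 s a) (t : ℕ) :
    ∀ s, 0 < stateDist τ ι π' t s → 0 < stateDist τ ι π t s := by
  induction t with
  | zero => intro s; rw [stateDist_zero, stateDist_zero]; exact id
  | succ t ih =>
    intro s h
    rw [stateDist_succ] at h
    obtain ⟨s₀, hs₀⟩ := exists_pos_of_sum_pos h
    have hd' : 0 < stateDist τ ι π' t s₀ ∧ 0 < Pmat τ π' s₀ s := by
      rcases mul_pos_iff.mp hs₀ with h' | h'
      · exact h'
      · exact absurd h'.2 (not_lt.mpr (pmat_nonneg hτ π' s₀ s))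
    have hd2 := hd'.2
    rw [pmat_apply] at hd2
    obtain ⟨a₀, ha₀⟩ := exists_pos_of_sum_pos hd2
    have hτpos : 0 < τ s₀ a₀ s := by
      rcases mul_pos_iff.mp ha₀ with h' | h'
      · exact h'.2
      · exact absurd h'.2 (not_lt.mpr ((hτ s₀ a₀).1 s))
    have hP : 0 < Pmat τ π s₀ s := by
      rw [pmat_apply]
      have h1 : 0 < π.1 s₀ a₀ * τ s₀ a₀ s := mul_pos (hπ s₀ a₀) hτpos
      have h2 : π.1 s₀ a₀ * τ s₀ a₀ s ≤ ∑ a, π.1 s₀ a * τ s₀ a s :=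
        Finset.single_le_sum
          (fun a _ => mul_nonneg ((π.2 s₀).1 a) ((hτ s₀ a).1 s)) (Finset.mem_univ a₀)
      linarith
    have hterm : 0 < stateDist τ ι π t s₀ * Pmat τ π s₀ s :=
      mul_pos (ih s₀ hd'.1) hP
    rw [stateDist_succ]
    have h2 : stateDist τ ι π t s₀ * Pmat τ π s₀ s
        ≤ ∑ s', stateDist τ ι π t s' * Pmat τ π s' s :=
      Finset.single_le_sum (fun s' _ =>
        mul_nonneg ((stateDist_probVec hτ hι π t).1 s') (pmat_nonneg hτ π s' s))
        (Finset.mem_univ s₀)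
    linarith

lemma nu_pos (hτ : ∀ s a, IsProbVec (τ s a)) (hι : IsProbVec ι)
    (hγ0 : 0 < γ) (hγ1 : γ < 1) (hreach : AllReachable τ ι)
    (π : Policy S A) (hπ : ∀ s a, 0 < π.1 s a) (s : S) :
    0 < nuF τ ι γ π s := by
  obtain ⟨π', t, ht⟩ := hreach s
  have hpos : 0 < γ ^ t * stateDist τ ι π t s :=
    mul_pos (pow_pos hγ0 t) (reach_mono hτ hι π π' hπ t s ht)
  have hle : γ ^ t * stateDist τ ι π t s ≤ nuF τ ι γ π s :=
    Summable.le_tsum (summable_nu hτ hι hγ0 hγ1 π s) t fun j _ =>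
      mul_nonneg (pow_nonneg hγ0.le j) ((stateDist_probVec hτ hι π j).1 s)
  linarith

/-- Every positive solution of the flow equation is the occupancy measure
of a positive policy. -/
lemma occ_of_pos (hτ : ∀ s a, IsProbVec (τ s a)) (hι : IsProbVec ι)
    (hγ0 : 0 < γ) (hγ1 : γ < 1) (x : (S × A) → ℝ)
    (hx : ∀ p, 0 < x p) (hF : Fmap τ γ x = ι) :
    ∃ π : Policy S A, (∀ s a, 0 < π.1 s a) ∧ occ τ ι γ π = x := by
  set μ : S → ℝ := fun s => ∑ a, x (s, a) with hμdef
  have hμpos : ∀ s, 0 < μ s := fun s =>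
    Finset.sum_pos (fun a _ => hx (s, a)) Finset.univ_nonempty
  refine ⟨⟨fun s a => x (s, a) / μ s, fun s => ⟨fun a => le_of_lt (div_pos (hx (s, a)) (hμpos s)), ?_⟩⟩, fun s a => div_pos (hx (s, a)) (hμpos s), ?_⟩
  · rw [← Finset.sum_div]
    exact div_self (hμpos s).ne'
  · set π : Policy S A :=
      ⟨fun s a => x (s, a) / μ s, fun s =>
        ⟨fun a => le_of_lt (div_pos (hx (s, a)) (hμpos s)), by
          rw [← Finset.sum_div]; exact div_self (hμpos s).ne'⟩⟩ with hπdef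
    have hμfix : ∀ s, μ s = ι s + γ * ∑ s', μ s' * Pmat τ π s' s := by
      intro s
      have hFs := congrFun hF s
      have hFs' : (∑ a, x (s, a)) - γ * ∑ p : S × A, x p * τ p.1 p.2 s = ι s := hFs
      have h2 : ∑ p : S × A, x p * τ p.1 p.2 s = ∑ s', μ s' * Pmat τ π s' s := by
        rw [Fintype.sum_prod_type]
        refine Finset.sum_congr rfl fun s' _ => ?_
        rw [pmat_apply, Finset.mul_sum]
        refine Finset.sum_congr rfl fun a _ => ?_
        show x (s', a) * τ s' a s = μ s' * (x (s', a) / μ s' * τ s' a s)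
        rw [← mul_assoc, ← mul_div_assoc, mul_div_cancel_left₀ _ (hμpos s').ne']
      rw [h2] at hFs'
      linarith
    have hνfix := nu_fixed hτ hι hγ0 hγ1 π
    have hμν : nuF τ ι γ π = μ :=
      fixed_unique hγ0 hγ1 (Pmat τ π) (pmat_nonneg hτ π) (pmat_row hτ π) ι
        (nuF τ ι γ π) μ hνfix hμfix
    funext p
    rw [occ_eq_nu, hμν]
    show μ p.1 * (x (p.1, p.2) / μ p.1) = x p
    rw [mul_comm]
    exact div_mul_cancel₀ _ (hμpos p.1).ne'

end OccAux3
section OccAux4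
set_option linter.unusedSectionVars false

variable {S A : Type} [Fintype S] [DecidableEq S] [Fintype A] [Nonempty A]

/-- The uniform policy. -/
noncomputable def unifPolicy (S A : Type) [Fintype A] [Nonempty A] : Policy S A :=
  ⟨fun _ _ => (Fintype.card A : ℝ)⁻¹, fun s => by
    constructor
    · intro a
      positivity
    · rw [Finset.sum_const, Finset.card_univ, nsmul_eq_mul]
      rw [mul_inv_cancel₀]
      exact_mod_cast Fintype.card_ne_zero⟩

lemma unifPolicy_pos (s : S) (a : A) : 0 < (unifPolicy S A).1 s a := by
  show (0 : ℝ) < (Fintype.card A : ℝ)⁻¹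
  have : (0 : ℝ) < (Fintype.card A : ℝ) := by
    exact_mod_cast Fintype.card_pos
  positivity

variable {τ : S → A → S → ℝ} {γ : ℝ}

lemma Fmap_surjective (hτ : ∀ s a, IsProbVec (τ s a))
    (hγ0 : 0 < γ) (hγ1 : γ < 1) :
    Function.Surjective (Fmap τ γ : ((S × A) → ℝ) →ₗ[ℝ] (S → ℝ)) := by
  set P : Matrix S S ℝ := Pmat τ (unifPolicy S A) with hP
  let T : (S → ℝ) →ₗ[ℝ] (S → ℝ) :=
    { toFun := fun w => fun s => w s - γ * ∑ s', w s' * P s' s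
      map_add' := fun w v => by
        funext s
        simp only [Pi.add_apply, add_mul, Finset.sum_add_distrib]
        ring
      map_smul' := fun c w => by
        funext s
        simp only [Pi.smul_apply, smul_eq_mul, RingHom.id_apply]
        have h2 : ∑ s', c * w s' * P s' s = c * ∑ s', w s' * P s' s := by
          rw [Finset.mul_sum]; exact Finset.sum_congr rfl fun s' _ => by ring
        rw [h2]; ring }
  have hTinj : Function.Injective T := by
    intro w v h
    refine fixed_unique hγ0 hγ1 P (pmat_nonneg hτ _) (pmat_row hτ _)
      (T w) w v (fun s => by show w s = w s - γ * _ + γ * _; ring) (fun s => ?_)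
    have h' : w s - γ * ∑ s', w s' * P s' s = v s - γ * ∑ s', v s' * P s' s :=
      congrFun h s
    show v s = (w s - γ * ∑ s', w s' * P s' s) + γ * ∑ s', v s' * P s' s
    linarith
  have hTsurj : Function.Surjective T :=
    (LinearMap.injective_iff_surjective).mp hTinj
  intro v
  obtain ⟨w, hw⟩ := hTsurj v
  refine ⟨fun p => w p.1 * (Fintype.card A : ℝ)⁻¹, ?_⟩
  have hcard : (0 : ℝ) < (Fintype.card A : ℝ) := by exact_mod_cast Fintype.card_pos
  funext s
  show (∑ a : A, w s * (Fintype.card A : ℝ)⁻¹)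
      - γ * ∑ p : S × A, w p.1 * (Fintype.card A : ℝ)⁻¹ * τ p.1 p.2 s = v s
  have h1 : ∑ a : A, w s * (Fintype.card A : ℝ)⁻¹ = w s := by
    rw [Finset.sum_const, Finset.card_univ, nsmul_eq_mul]
    field_simp
  have h2 : ∑ p : S × A, w p.1 * (Fintype.card A : ℝ)⁻¹ * τ p.1 p.2 s
      = ∑ s', w s' * P s' s := by
    rw [Fintype.sum_prod_type]
    refine Finset.sum_congr rfl fun s' _ => ?_
    rw [hP, pmat_apply, Finset.mul_sum]
    refine Finset.sum_congr rfl fun a _ => ?_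
    show w s' * (Fintype.card A : ℝ)⁻¹ * τ s' a s
        = w s' * ((Fintype.card A : ℝ)⁻¹ * τ s' a s)
    ring
  rw [h1, h2]
  exact congrFun hw s

end OccAux4
section OccFinal
set_option linter.unusedSectionVars false

/-- The flow-constraint affine subspace. -/
noncomputable def flowAff {S A : Type} [Fintype S] [Fintype A]
    (τ : S → A → S → ℝ) (γ : ℝ) (ι : S → ℝ) : AffineSubspace ℝ ((S × A) → ℝ) where
  carrier := {x | Fmap τ γ x = ι}
  smul_vsub_vadd_mem' c p₁ p₂ p₃ h₁ h₂ h₃ := by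
    simp only [Set.mem_setOf_eq] at *
    have h : Fmap τ γ (c • (p₁ -ᵥ p₂) +ᵥ p₃)
        = c • (Fmap τ γ p₁ - Fmap τ γ p₂) + Fmap τ γ p₃ := by
      simp [vsub_eq_sub, vadd_eq_add, map_add, map_smul, map_sub]
    rw [h, h₁, h₂, h₃]
    simp

lemma exists_eps {X : Type} [Fintype X] [Nonempty X] (p₀ z : X → ℝ)
    (hp : ∀ x, 0 < p₀ x) : ∃ ε : ℝ, 0 < ε ∧ ∀ x, 0 < p₀ x + ε * z x := by
  set ε := Finset.univ.inf' Finset.univ_nonempty (fun x => p₀ x / (|z x| + 1)) with hε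
  have hεpos : 0 < ε := by
    rw [hε, Finset.lt_inf'_iff]
    intro x _
    exact div_pos (hp x) (by positivity)
  refine ⟨ε, hεpos, fun x => ?_⟩
  have h1 : ε ≤ p₀ x / (|z x| + 1) := Finset.inf'_le _ (Finset.mem_univ x)
  have h2 : ε * |z x| ≤ p₀ x / (|z x| + 1) * |z x| :=
    mul_le_mul_of_nonneg_right h1 (abs_nonneg _)
  have h3 : p₀ x / (|z x| + 1) * |z x| < p₀ x := by
    rw [div_mul_eq_mul_div, div_lt_iff₀ (by positivity)]
    nlinarith [abs_nonneg (z x), hp x]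
  have h4 : -(ε * |z x|) ≤ ε * z x := by
    nlinarith [neg_abs_le (z x), hεpos.le]
  linarith

end OccFinal

theorem stmt_11 {S A : Type} [Fintype S] [DecidableEq S] [Fintype A]
    [Nonempty S] [Nonempty A]
    (τ : S → A → S → ℝ) (hτ : ∀ s a, IsProbVec (τ s a))
    (ι : S → ℝ) (hι : IsProbVec ι)
    (γ : ℝ) (hγ0 : 0 < γ) (hγ1 : γ < 1)
    (hreach : AllReachable τ ι) :
    Module.finrank ℝ (affineSpan ℝ (Set.range (occ τ ι γ))).direction =
      Fintype.card S * (Fintype.card A - 1) ∧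
    IsOpen {x : affineSpan ℝ (Set.range (occ τ ι γ)) |
      (x : (S × A) → ℝ) ∈ occ τ ι γ '' {π : Policy S A | ∀ s a, 0 < π.1 s a}} := by
  classical
  set R : Set ((S × A) → ℝ) := Set.range (occ τ ι γ) with hR
  have hFocc : ∀ π : Policy S A, Fmap τ γ (occ τ ι γ π) = ι :=
    Fmap_occ hτ hι hγ0 hγ1
  have hle : affineSpan ℝ R ≤ flowAff τ γ ι := by
    rw [affineSpan_le]
    rintro y ⟨π, rfl⟩
    exact hFocc π
  have himg : occ τ ι γ '' {π : Policy S A | ∀ s a, 0 < π.1 s a}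
      = {y : (S × A) → ℝ | Fmap τ γ y = ι ∧ ∀ p, 0 < y p} := by
    ext y
    constructor
    · rintro ⟨π, hπ, rfl⟩
      refine ⟨hFocc π, fun p => ?_⟩
      rw [occ_eq_nu]
      exact mul_pos (nu_pos hτ hι hγ0 hγ1 hreach π hπ p.1) (hπ p.1 p.2)
    · rintro ⟨h1, h2⟩
      obtain ⟨π, hπ, h⟩ := occ_of_pos hτ hι hγ0 hγ1 y h2 h1
      exact ⟨π, hπ, h⟩
  set p₀ : (S × A) → ℝ := occ τ ι γ (unifPolicy S A) with hp₀
  have hp₀pos : ∀ p, 0 < p₀ p := by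
    intro p
    rw [hp₀, occ_eq_nu]
    exact mul_pos
      (nu_pos hτ hι hγ0 hγ1 hreach _ (fun s a => unifPolicy_pos s a) p.1)
      (unifPolicy_pos p.1 p.2)
  have hmem₀ : p₀ ∈ R := ⟨_, rfl⟩
  have hdir : (affineSpan ℝ R).direction = LinearMap.ker (Fmap τ γ) := by
    rw [direction_affineSpan]
    apply le_antisymm
    · rw [vectorSpan_def, Submodule.span_le]
      rintro z hz
      rw [Set.mem_vsub] at hz
      obtain ⟨x, hx, y, hy, rfl⟩ := hz
      obtain ⟨πx, rfl⟩ := hx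
      obtain ⟨πy, rfl⟩ := hy
      simp only [SetLike.mem_coe, LinearMap.mem_ker, vsub_eq_sub, map_sub,
        hFocc, sub_self]
    · intro z hz
      rw [LinearMap.mem_ker] at hz
      obtain ⟨ε, hε, hpos⟩ := exists_eps p₀ z hp₀pos
      have hF2 : Fmap τ γ (p₀ + ε • z) = ι := by
        rw [map_add, map_smul, hz, hFocc (unifPolicy S A)]
        simp
      have hmem : p₀ + ε • z ∈ R := by
        obtain ⟨π, _, h⟩ := occ_of_pos hτ hι hγ0 hγ1 (p₀ + ε • z)
          (fun p => hpos p) hF2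
        exact ⟨π, h⟩
      have hvs : (p₀ + ε • z) -ᵥ p₀ ∈ vectorSpan ℝ R :=
        vsub_mem_vectorSpan ℝ hmem hmem₀
      have hεz : ε • z ∈ vectorSpan ℝ R := by
        simpa [vsub_eq_sub] using hvs
      have hz' := Submodule.smul_mem (vectorSpan ℝ R) ε⁻¹ hεz
      rwa [smul_smul, inv_mul_cancel₀ hε.ne', one_smul] at hz'
  constructor
  · rw [hdir]
    have hrk := LinearMap.finrank_range_add_finrank_ker (Fmap τ γ)
    rw [LinearMap.range_eq_top.mpr (Fmap_surjective hτ hγ0 hγ1), finrank_top,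
      Module.finrank_fintype_fun_eq_card, Module.finrank_fintype_fun_eq_card,
      Fintype.card_prod] at hrk
    obtain ⟨k, hk⟩ : ∃ k, Fintype.card A = k + 1 :=
      ⟨Fintype.card A - 1, by have := Fintype.card_pos (α := A); omega⟩
    rw [hk, Nat.mul_succ] at hrk
    have hgoal : Fintype.card S * (Fintype.card A - 1) = Fintype.card S * k := by
      rw [hk]; simp
    rw [hgoal]
    rw [Nat.add_comm (Fintype.card S * k) (Fintype.card S)] at hrk
    exact Nat.add_left_cancel hrk
  · have hset : {x : affineSpan ℝ R |
        (x : (S × A) → ℝ) ∈ occ τ ι γ '' {π : Policy S A | ∀ s a, 0 < π.1 s a}}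
        = (Subtype.val : affineSpan ℝ R → (S × A) → ℝ) ⁻¹'
          {y : (S × A) → ℝ | ∀ p, 0 < y p} := by
      ext x
      simp only [Set.mem_setOf_eq, Set.mem_preimage, himg]
      constructor
      · rintro ⟨_, h⟩
        exact h
      · intro h
        exact ⟨hle x.2, h⟩
    rw [hset]
    refine IsOpen.preimage continuous_subtype_val ?_
    have hrw : {y : (S × A) → ℝ | ∀ p, 0 < y p}
        = ⋂ p, {y : (S × A) → ℝ | 0 < y p} := by
      ext y; simp
    rw [hrw]
    exact isOpen_iInter_of_finite fun p =>
      isOpen_lt continuous_const (continuous_apply p)
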